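/- Let A be a commutative unital *-algebra over ℂ and q a C*-seminorm on A. Let Â_q be the set of q-bounded characters of A, i.e. characters χ with |χ(a)| ≤ q(a) for all a ∈ A, equipped with the topology of pointwise convergence. Then Â_q is a compact topological space, and for every a ∈ A one has q(a) = sup{|χ(a)| : χ ∈ Â_q}, the supremum over the empty set being 0. (Equivalently, the Hausdorff completion of A with respect to q is *-isomorphic to the C*-algebra C(Â_q).) -/

import Mathlib

/-- A character of a unital `⋆`-algebra over `ℂ`: a unital, multiplicative, `ℂ`-linear,
`⋆`-preserving functional. -/
def IsCharacter (A : Type*) [Ring A] [Algebra ℂ A] [StarRing A] [StarModule ℂ A]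
    (χ : A → ℂ) : Prop :=
  χ 1 = 1 ∧ (∀ a b : A, χ (a * b) = χ a * χ b) ∧ (∀ a b : A, χ (a + b) = χ a + χ b) ∧
    (∀ (c : ℂ) (a : A), χ (c • a) = c * χ a) ∧ (∀ a : A, χ (star a) = starRingEnd ℂ (χ a))

/-!
Compactness is Tychonoff's theorem: the `q`-bounded characters form a closed subset of the
product of the closed discs of radii `q a`.

For the norm formula, `q` makes `A` a seminormed commutative `⋆`-algebra satisfying the
C⋆-identity, so its Hausdorff completion is a commutative C⋆-algebra, on which the Gelfand
transform is isometric. Hence `q a` is the supremum of `‖φ a‖` over the characters `φ` of the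
completion; these restrict to `q`-bounded characters of `A`, and conversely every `q`-bounded
character `χ` has `‖χ a‖ ≤ q a`.
-/

open UniformSpace

section Characters

variable (A : Type*) [Ring A] [Algebra ℂ A] [StarRing A] [StarModule ℂ A]

theorem isClosed_setOf_isCharacter : IsClosed {χ : A → ℂ | IsCharacter A χ} := by
  have hstar : IsClosed {χ : A → ℂ | ∀ a, χ (star a) = starRingEnd ℂ (χ a)} := by
    simp only [Set.ofPred_forall]
    exact isClosed_iInter fun a =>
      isClosed_eq (continuous_apply _) (Complex.continuous_conj.comp (continuous_apply a))
  exact (isClosed_setOfPred_map_one A ℂ).inter <| (isClosed_setOfPred_map_mul A ℂ).inter <|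
    (isClosed_setOfPred_map_add A ℂ).inter <| (isClosed_setOfPred_map_smul A ℂ id).inter hstar

theorem isCompact_setOf_isCharacter_norm_le (q : A → ℝ) :
    IsCompact {χ : A → ℂ | IsCharacter A χ ∧ ∀ a, ‖χ a‖ ≤ q a} := by
  have hbounded : IsClosed {χ : A → ℂ | ∀ a, ‖χ a‖ ≤ q a} := by
    simp only [Set.ofPred_forall]
    exact isClosed_iInter fun a => isClosed_le (continuous_apply a).norm continuous_const
  have hclosed : IsClosed {χ : A → ℂ | IsCharacter A χ ∧ ∀ a, ‖χ a‖ ≤ q a} :=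
    (isClosed_setOf_isCharacter A).inter hbounded
  have hsub : {χ : A → ℂ | IsCharacter A χ ∧ ∀ a, ‖χ a‖ ≤ q a} ⊆
      Set.univ.pi fun a => Metric.closedBall 0 (q a) := fun χ hχ a _ => by
    simpa using hχ.2 a
  exact (isCompact_univ_pi fun a => isCompact_closedBall _ _).of_isClosed_subset hclosed hsub

end Characters

theorem NormedStarGroup.of_norm_mul_self_le {E : Type*} [SeminormedRing E] [StarRing E]
    (h : ∀ x : E, ‖x‖ * ‖x‖ ≤ ‖star x * x‖) : NormedStarGroup E where
  norm_star_le x := by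
    rcases (norm_nonneg (star x)).eq_or_lt with hx | hx
    · exact hx ▸ norm_nonneg x
    · refine le_of_mul_le_mul_right ?_ hx
      simpa using (h (star x)).trans (norm_mul_le _ _)

namespace UniformSpace.Completion

section Star

variable {A : Type*} [SeminormedRing A] [StarRing A] [NormedStarGroup A]

noncomputable instance : Star (Completion A) := ⟨Completion.map star⟩

theorem coe_star (a : A) : ((star a : A) : Completion A) = star (a : Completion A) :=
  (map_coe star_isometry.uniformContinuous a).symm

instance : ContinuousStar (Completion A) := ⟨continuous_map⟩

noncomputable instance : StarRing (Completion A) where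
  star_involutive x := induction_on x (isClosed_eq (by fun_prop) continuous_id)
    fun a => by rw [← coe_star, ← coe_star, star_star]
  star_mul x y := induction_on₂ x y (isClosed_eq (by fun_prop) (by fun_prop))
    fun a b => by rw [← coe_mul, ← coe_star, ← coe_star, ← coe_star, ← coe_mul, star_mul]
  star_add x y := induction_on₂ x y (isClosed_eq (by fun_prop) (by fun_prop))
    fun a b => by rw [← coe_add, ← coe_star, ← coe_star, ← coe_star, ← coe_add, star_add]

instance {R : Type*} [SMul R A] [Star R] [StarModule R A] [UniformContinuousConstSMul R A] :
    StarModule R (Completion A) where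
  star_smul c x := induction_on x (isClosed_eq (continuous_star.comp (continuous_const_smul c))
      ((continuous_const_smul (star c)).comp continuous_star))
    fun a => by rw [← coe_smul, ← coe_star, ← coe_star, ← coe_smul, star_smul]

theorem cStarRing_of_norm_mul_self_le (h : ∀ a : A, ‖a‖ * ‖a‖ ≤ ‖star a * a‖) :
    CStarRing (Completion A) where
  norm_mul_self_le x := induction_on x (isClosed_le (by fun_prop) (by fun_prop))
    fun a => by rw [← coe_star, ← coe_mul, norm_coe, norm_coe]; exact h a

end Star

end UniformSpace.Completion

open WeakDual in
theorem CommCStarAlgebra.norm_eq_iSup_norm_characterSpace {C : Type*} [CommCStarAlgebra C]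
    (x : C) : ‖x‖ = ⨆ φ : characterSpace ℂ C, ‖φ x‖ := by
  rw [← (gelfandTransform_isometry C).norm_map_of_map_zero (map_zero _),
    ContinuousMap.norm_eq_iSup_norm]
  rfl

section Gelfand

open WeakDual UniformSpace.Completion

variable {A : Type*} [SeminormedCommRing A] [NormedAlgebra ℂ A] [StarRing A] [StarModule ℂ A]
  [NormedStarGroup A] [CStarRing (Completion A)]

noncomputable instance : CommCStarAlgebra (Completion A) where

theorem UniformSpace.Completion.isCharacter_comp_coe (φ : characterSpace ℂ (Completion A)) :
    IsCharacter A fun a : A => φ a := by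
  refine ⟨?_, fun a b => ?_, fun a b => ?_, fun c a => ?_, fun a => ?_⟩
  · simp only [coe_one, map_one]
  · simp only [coe_mul, map_mul]
  · simp only [coe_add, map_add]
  · simp only [coe_smul, map_smul, smul_eq_mul]
  · simp only [coe_star, map_star, starRingEnd_apply]

theorem UniformSpace.Completion.norm_apply_coe_le (φ : characterSpace ℂ (Completion A)) (a : A) :
    ‖φ a‖ ≤ ‖a‖ := by
  have : Nontrivial (Completion A) := ⟨1, 0, fun h => by simpa [h] using map_one φ⟩
  simpa only [norm_coe] using AlgHom.norm_apply_le_self φ (a : Completion A)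

theorem norm_eq_sSup_norm_isCharacter (a : A) :
    ‖a‖ = sSup ((fun χ : A → ℂ => ‖χ a‖) '' {χ | IsCharacter A χ ∧ ∀ b, ‖χ b‖ ≤ ‖b‖}) := by
  have hle : ∀ r ∈ (fun χ : A → ℂ => ‖χ a‖) '' {χ | IsCharacter A χ ∧ ∀ b, ‖χ b‖ ≤ ‖b‖},
      r ≤ ‖a‖ := by
    rintro - ⟨χ, hχ, rfl⟩
    exact hχ.2 a
  refine le_antisymm ?_ (Real.sSup_le hle (norm_nonneg a))
  rw [← norm_coe, CommCStarAlgebra.norm_eq_iSup_norm_characterSpace]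
  refine Real.iSup_le (fun φ => le_csSup ⟨‖a‖, hle⟩ ?_) (Real.sSup_nonneg ?_)
  · exact ⟨_, ⟨isCharacter_comp_coe φ, norm_apply_coe_le φ⟩, rfl⟩
  · rintro - ⟨χ, -, rfl⟩
    exact norm_nonneg _

end Gelfand

theorem qBounded_characters_compact_and_norm_eq_sup
    (A : Type*) [CommRing A] [Algebra ℂ A] [StarRing A] [StarModule ℂ A]
    (q : A → ℝ)
    (hq_smul : ∀ (c : ℂ) (a : A), q (c • a) = ‖c‖ * q a)
    (hq_add : ∀ a b : A, q (a + b) ≤ q a + q b)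
    (hq_mul : ∀ a b : A, q (a * b) ≤ q a * q b)
    (hq_cstar : ∀ a : A, q (star a * a) = q a ^ 2) :
    IsCompact {χ : A → ℂ | IsCharacter A χ ∧ ∀ a : A, ‖χ a‖ ≤ q a} ∧
    ∀ a : A, q a =
      sSup ((fun χ : A → ℂ => ‖χ a‖) ''
        {χ : A → ℂ | IsCharacter A χ ∧ ∀ b : A, ‖χ b‖ ≤ q b}) := by
  refine ⟨isCompact_setOf_isCharacter_norm_le A q, fun a => ?_⟩
  let _ : SeminormedCommRing A :=
    { RingSeminorm.toSeminormedRing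
        { toFun := q
          map_zero' := by simpa using hq_smul 0 0
          add_le' := hq_add
          neg' := fun a => by simpa using hq_smul (-1) a
          mul_le' := hq_mul } with
      mul_comm := mul_comm }
  let _ : NormedAlgebra ℂ A := { norm_smul_le := fun c a => (hq_smul c a).le }
  have hcstar : ∀ a : A, ‖a‖ * ‖a‖ ≤ ‖star a * a‖ := fun a => (hq_cstar a ▸ sq (q a)).ge
  have := NormedStarGroup.of_norm_mul_self_le hcstar
  have := UniformSpace.Completion.cStarRing_of_norm_mul_self_le hcstar
  exact norm_eq_sSup_norm_isCharacter a
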